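/- If I and I' are linear orders with I ≡_k I', then for any linear order L, the lexicographic products L·I and L·I' satisfy L·I ≡_k L·I' (where L·I = ∑_{i∈I} L). -/

import Mathlib

/-!
The rank-`k` type of a tuple records, for `k = 0`, the order between its entries and, for `k + 1`,
its rank-`k` type together with the set of rank-`k` types of its one-point extensions; equal types
are exactly a winning position for the `k`-round Ehrenfeucht–Fraïssé game. There are finitely many
types, so each is expressed by a Hintikka formula of quantifier rank `k`, and `M ≡ₖ N` holds iff the
empty tuples of `M` and `N` have the same rank-`k` type.

In `I ×ₗ L` a tuple's type is determined by the type of its `I`-coordinates and by its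
`L`-coordinates: a move `(i, l)` on one side is answered by `(i', l)`, where `i'` answers `i` in the
game on `I` and `I'`.
-/

open FirstOrder Language Ordinal

attribute [local instance] FirstOrder.Language.orderStructure

/-- Quantifier rank of a bounded formula. -/
def qr {α : Type*} : ∀ {n : ℕ}, Language.order.BoundedFormula α n → ℕ
  | _, .falsum => 0
  | _, .equal _ _ => 0
  | _, .rel _ _ => 0
  | _, .imp f g => max (qr f) (qr g)
  | _, .all f => qr f + 1

/-- `M ≡ₖ N` : the linear orders `M` and `N` satisfy the same
first-order sentences of the language of orders of quantifier rank `≤ k`. -/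
def EqRk (k : ℕ) (M : Type*) (N : Type*) [LinearOrder M] [LinearOrder N] : Prop :=
  ∀ φ : Language.order.Sentence, qr φ ≤ k → (M ⊨ φ ↔ N ⊨ φ)

instance {M : Type*} [LE M] : Language.order.OrderedStructure M :=
  ⟨fun _ => Iff.rfl⟩

namespace FirstOrder.Language

lemma Term.exists_eq_var_inr {n : ℕ} (t : Language.order.Term (Empty ⊕ Fin n)) :
    ∃ a, t = var (Sum.inr a) := by
  rcases t with ⟨e | a⟩ | ⟨f, _⟩
  exacts [e.elim, ⟨a, rfl⟩, f.elim]

namespace BoundedFormula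

variable {α β : Type*} {n k : ℕ}

@[simp] lemma qr_not (φ : Language.order.BoundedFormula α n) : qr φ.not = qr φ := by
  simp [qr]

@[simp] lemma qr_inf (φ ψ : Language.order.BoundedFormula α n) :
    qr (φ ⊓ ψ) = max (qr φ) (qr ψ) :=
  show qr (φ.imp ψ.not).not = _ by simp [qr]

@[simp] lemma qr_sup (φ ψ : Language.order.BoundedFormula α n) :
    qr (φ ⊔ ψ) = max (qr φ) (qr ψ) :=
  show qr (φ.not.imp ψ) = _ by simp [qr]

@[simp] lemma qr_le (t₁ t₂ : Language.order.Term (α ⊕ Fin n)) : qr (t₁.le t₂) = 0 := rfl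

@[simp] lemma qr_all (φ : Language.order.BoundedFormula α (n + 1)) : qr φ.all = qr φ + 1 := rfl

@[simp] lemma qr_ex (φ : Language.order.BoundedFormula α (n + 1)) : qr φ.ex = qr φ + 1 := by
  simp [BoundedFormula.ex]

lemma qr_foldr_le {op : Language.order.BoundedFormula α n → Language.order.BoundedFormula α n →
      Language.order.BoundedFormula α n}
    (hop : ∀ φ ψ, qr (op φ ψ) = max (qr φ) (qr ψ)) {φ₀ : Language.order.BoundedFormula α n}
    (h₀ : qr φ₀ ≤ k) {l : List (Language.order.BoundedFormula α n)} (hl : ∀ φ ∈ l, qr φ ≤ k) :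
    qr (l.foldr op φ₀) ≤ k := by
  induction l with
  | nil => exact h₀
  | cons φ l ih => simpa [hop, hl φ] using ih fun ψ hψ => hl ψ (by simp [hψ])

lemma qr_iInf_le [Finite β] {f : β → Language.order.BoundedFormula α n}
    (h : ∀ b, qr (f b) ≤ k) : qr (iInf f) ≤ k :=
  qr_foldr_le qr_inf (by simp [qr]) (by simpa using h)

lemma qr_iSup_le [Finite β] {f : β → Language.order.BoundedFormula α n}
    (h : ∀ b, qr (f b) ≤ k) : qr (iSup f) ≤ k :=
  qr_foldr_le qr_sup (Nat.zero_le k) (by simpa using h)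

end BoundedFormula

end FirstOrder.Language

@[reducible] def RankType : ℕ → ℕ → Type
  | 0, n => Fin n → Fin n → Bool
  | k + 1, n => RankType k n × Set (RankType k (n + 1))

instance RankType.finite : ∀ {k n : ℕ}, Finite (RankType k n)
  | 0, _ => inferInstanceAs (Finite (Fin _ → Fin _ → Bool))
  | k + 1, n =>
    have := @RankType.finite k n
    have := @RankType.finite k (n + 1)
    inferInstanceAs (Finite (RankType k n × Set (RankType k (n + 1))))

def rankType : ∀ (k : ℕ) (M : Type*) [LinearOrder M] {n : ℕ}, (Fin n → M) → RankType k n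
  | 0, _, _, _, v => fun a b => decide (v a ≤ v b)
  | k + 1, M, _, _, v => (rankType k M v, Set.range fun m => rankType k M (Fin.snoc v m))

section rankType

variable {M N : Type*} [LinearOrder M] [LinearOrder N] {n k : ℕ} {v : Fin n → M} {w : Fin n → N}

lemma rankType_zero_eq_iff :
    rankType 0 M v = rankType 0 N w ↔ ∀ a b, v a ≤ v b ↔ w a ≤ w b := by
  simp only [rankType, funext_iff, decide_eq_decide]

lemma rankType_succ_eq_iff :
    rankType (k + 1) M v = rankType (k + 1) N w ↔ rankType k M v = rankType k N w ∧
      (∀ m, ∃ m', rankType k M (Fin.snoc v m) = rankType k N (Fin.snoc w m')) ∧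
      (∀ m', ∃ m, rankType k M (Fin.snoc v m) = rankType k N (Fin.snoc w m')) := by
  simp [rankType, Set.Subset.antisymm_iff, Set.range_subset_iff, eq_comm]

lemma le_iff_le_of_rankType_eq (h : rankType k M v = rankType k N w) (a b : Fin n) :
    v a ≤ v b ↔ w a ≤ w b := by
  induction k with
  | zero => exact rankType_zero_eq_iff.1 h a b
  | succ k ih => exact ih (rankType_succ_eq_iff.1 h).1

end rankType

open BoundedFormula

theorem realize_iff_of_rankType_eq {M N : Type*} [LinearOrder M] [LinearOrder N] {n : ℕ}
    (φ : Language.order.BoundedFormula Empty n) {k : ℕ} (hφ : qr φ ≤ k) {v : Fin n → M}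
    {w : Fin n → N} (h : rankType k M v = rankType k N w)
    (e : Empty → M) (e' : Empty → N) : φ.Realize e v ↔ φ.Realize e' w := by
  induction φ generalizing k with
  | falsum => exact Iff.rfl
  | equal t₁ t₂ =>
    obtain ⟨a, rfl⟩ := Term.exists_eq_var_inr t₁
    obtain ⟨b, rfl⟩ := Term.exists_eq_var_inr t₂
    show v a = v b ↔ w a = w b
    simp only [le_antisymm_iff, le_iff_le_of_rankType_eq h]
  | rel R ts =>
    choose σ hσ using fun i => Term.exists_eq_var_inr (ts i)
    obtain rfl : ts = fun i => var (Sum.inr (σ i)) := funext hσ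
    cases R
    exact le_iff_le_of_rankType_eq h (σ 0) (σ 1)
  | imp φ ψ ihφ ihψ =>
    simp only [qr, max_le_iff] at hφ
    exact imp_congr (ihφ hφ.1 h) (ihψ hφ.2 h)
  | all φ ih =>
    obtain _ | k := k
    · exact absurd hφ (by simp [qr])
    obtain ⟨-, forth, back⟩ := rankType_succ_eq_iff.1 h
    refine ⟨fun hv m' => ?_, fun hw m => ?_⟩
    · obtain ⟨m, hm⟩ := back m'
      exact (ih (Nat.le_of_succ_le_succ hφ) hm).1 (hv m)
    · obtain ⟨m', hm⟩ := forth m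
      exact (ih (Nat.le_of_succ_le_succ hφ) hm).2 (hw m')

noncomputable def hintikka : ∀ (k : ℕ) {n : ℕ}, RankType k n →
    Language.order.BoundedFormula Empty n
  | 0, _, t => iInf fun p : Fin _ × Fin _ =>
      let φ := (var (Sum.inr p.1)).le (var (Sum.inr p.2))
      if t p.1 p.2 then φ else φ.not
  | k + 1, _, t => hintikka k t.1 ⊓ (iInf fun s : t.2 => (hintikka k s.1).ex) ⊓
      (iSup fun s : t.2 => hintikka k s.1).all

lemma qr_hintikka : ∀ (k : ℕ) {n : ℕ} (t : RankType k n), qr (hintikka k t) ≤ k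
  | 0, _, t => qr_iInf_le fun p => by split <;> simp
  | k + 1, _, t => by
    simp only [hintikka, qr_inf, qr_all, max_le_iff]
    refine ⟨⟨(qr_hintikka k t.1).trans k.le_succ, qr_iInf_le fun s => ?_⟩,
      Nat.succ_le_succ (qr_iSup_le fun s => qr_hintikka k _)⟩
    simpa using qr_hintikka k s.1

lemma realize_hintikka {M : Type*} [LinearOrder M] (e : Empty → M) :
    ∀ (k : ℕ) {n : ℕ} (t : RankType k n) (v : Fin n → M),
      (hintikka k t).Realize e v ↔ rankType k M v = t
  | 0, _, t, v => by
    simp only [hintikka, realize_iInf, rankType, funext_iff, Prod.forall]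
    refine forall₂_congr fun a b => ?_
    cases t a b <;> simp
  | k + 1, _, (t, T), v => by
    simp only [hintikka, realize_inf, realize_iInf, realize_ex, realize_all, realize_iSup,
      realize_hintikka e k, rankType]
    simp [Set.Subset.antisymm_iff, Set.subset_def, and_assoc, eq_comm]

theorem eqRk_iff_rankType_eq {k : ℕ} {M N : Type*} [LinearOrder M] [LinearOrder N] :
    EqRk k M N ↔ rankType k M (default : Fin 0 → M) = rankType k N (default : Fin 0 → N) := by
  refine ⟨fun h => ?_, fun h φ hφ => realize_iff_of_rankType_eq φ hφ h default default⟩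
  have hM : M ⊨ hintikka k (rankType k M default) := (realize_hintikka default k _ _).2 rfl
  exact ((realize_hintikka default k _ _).1 ((h _ (qr_hintikka k _)).1 hM)).symm

lemma Fin.snoc_toLex {α β : Type*} {n : ℕ} (v : Fin n → α) (w : Fin n → β) (p : α ×ₗ β) :
    Fin.snoc (fun a => toLex (v a, w a)) p =
      fun a => toLex (Fin.snoc (α := fun _ => α) v (ofLex p).1 a,
        Fin.snoc (α := fun _ => β) w (ofLex p).2 a) := by
  funext a
  refine Fin.lastCases ?_ (fun j => ?_) a <;> simp

theorem rankType_lex_eq {I I' : Type*} [LinearOrder I] [LinearOrder I'] (L : Type*)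
    [LinearOrder L] {k n : ℕ} {v : Fin n → I} {v' : Fin n → I'} (w : Fin n → L)
    (h : rankType k I v = rankType k I' v') :
    rankType k (I ×ₗ L) (fun a => toLex (v a, w a)) =
      rankType k (I' ×ₗ L) (fun a => toLex (v' a, w a)) := by
  induction k generalizing n with
  | zero =>
    rw [rankType_zero_eq_iff] at h ⊢
    simp only [Prod.Lex.toLex_le_toLex, lt_iff_le_not_ge, le_antisymm_iff, h, implies_true]
  | succ k ih =>
    obtain ⟨h₀, forth, back⟩ := rankType_succ_eq_iff.1 h
    refine rankType_succ_eq_iff.2 ⟨ih w h₀, fun m => ?_, fun m' => ?_⟩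
    · obtain ⟨i', hi⟩ := forth (ofLex m).1
      refine ⟨toLex (i', (ofLex m).2), ?_⟩
      simpa only [Fin.snoc_toLex, ofLex_toLex] using ih (Fin.snoc w (ofLex m).2) hi
    · obtain ⟨i, hi⟩ := back (ofLex m').1
      refine ⟨toLex (i, (ofLex m').2), ?_⟩
      simpa only [Fin.snoc_toLex, ofLex_toLex] using ih (Fin.snoc w (ofLex m').2) hi

/-- If `I ≡ₖ I'`, then for any linear order `L`, the lexicographic
products `L·I = ∑_{i∈I} L` and `L·I'` satisfy `L·I ≡ₖ L·I'`. -/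
theorem eqRk_prod_lex {k : ℕ} {I I' : Type*} [LinearOrder I] [LinearOrder I']
    (L : Type*) [LinearOrder L] (h : EqRk k I I') :
    EqRk k (I ×ₗ L) (I' ×ₗ L) := by
  rw [eqRk_iff_rankType_eq] at h ⊢
  convert rankType_lex_eq L default h using 2
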